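/- Let Σ be a finite alphabet of size q ≥ 2, n ≥ 1, δ ∈ (0,1), and set α = (1 − 1/q)(1 + δ). Let (K, Enc, Dec) be a finitary messageless secret-key code over Σ with codeword length n and soundness error ε_s. Let f be the truncated uniform resampler with budget αn, applied to γ = Enc(sk) with fresh independent randomness, and suppose P[Dec(sk, f(γ)) ≠ tampered ∧ f(γ) ≠ γ] ≤ ε_t. Then ε_s + ε_t ≥ 1 − q^{−n} − exp(−δ²(1 − 1/q)n/3). In particular, since f always changes at most αn coordinates, no such code can have both ε_s and ε_t negligible in n against tampering at rate α = (1 − 1/q)(1 + δ). -/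

import Mathlib

/-!
For every key `k` and sample `u`, one of four events occurs: `u = Enc k`; `u` lies farther than the
budget from `Enc k`; `Dec k u ≠ invalid`; or the resampler outputs `u ≠ Enc k` and the decoder does
not report `tampered`. Indeed, a `u ≠ Enc k` within the budget is the resampler's output, and a
decoder that rejects it as `invalid` has failed to report tampering. With `k ∼ w` and `u` uniform the
four probabilities are at most `q⁻ⁿ`, the Chernoff tail `exp (-δ²(1 - 1/q)n/3)` of the Hamming
distance to a fixed word (a binomial with mean `(1 - 1/q)n`), `εs` (soundness at each fixed `u`)
and `εt`; they sum to at least `1`.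
-/

open Finset Classical

/-- Decoding outcomes of a messageless secret-key code. -/
inductive DecOut where
  | valid
  | invalid
  | tampered
deriving DecidableEq

/-- The truncated uniform resampler with budget `b`: on codeword `γ` and uniform
randomness `u`, it outputs `u` if `dist(u, γ) ≤ b` and `γ` otherwise; it always
changes at most `b` coordinates of its input. -/
noncomputable def resample {S : Type} [Fintype S] [DecidableEq S] {n : ℕ}
    (b : ℝ) (γ u : Fin n → S) : Fin n → S :=
  if (hammingDist u γ : ℝ) ≤ b then u else γ

open Real

lemma exp_two_thirds_mul_sub_le {δ : ℝ} (hδ0 : 0 ≤ δ) (hδ1 : δ ≤ 3 / 2) :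
    exp (2 * δ / 3) - 1 - 2 * δ / 3 * (1 + δ) ≤ -(δ ^ 2 / 3) := by
  have h := exp_bound' (x := 2 * δ / 3) (by positivity) (by linarith) (n := 2) two_pos
  norm_num [sum_range_succ, Nat.factorial] at h
  nlinarith

lemma one_add_sub_one_mul_le_mul_exp {q : ℝ} (hq : 0 < q) (x : ℝ) :
    1 + (q - 1) * x ≤ q * exp ((1 - q⁻¹) * (x - 1)) := by
  calc 1 + (q - 1) * x = q * ((1 - q⁻¹) * (x - 1) + 1) := by field_simp; ring
    _ ≤ q * exp ((1 - q⁻¹) * (x - 1)) := by gcongr; exact add_one_le_exp _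

lemma card_lt_le_exp_mul_sum_exp {X : Type*} [Fintype X] (f : X → ℝ) (a : ℝ) {t : ℝ}
    (ht : 0 ≤ t) : (#{x | a < f x} : ℝ) ≤ exp (-(t * a)) * ∑ x, exp (t * f x) := by
  rw [natCast_card_filter, mul_sum]
  refine sum_le_sum fun x _ => ?_
  split_ifs
  · rw [← exp_add]
    exact one_le_exp (by nlinarith)
  · positivity

lemma sum_exp_mul_hammingDist {ι S : Type*} [Fintype ι] [DecidableEq ι] [Fintype S]
    [DecidableEq S] (γ : ι → S) (t : ℝ) :
    ∑ u : ι → S, exp (t * hammingDist u γ)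
      = (1 + (Fintype.card S - 1) * exp t) ^ Fintype.card ι := by
  have hprod : ∀ u : ι → S,
      exp (t * hammingDist u γ) = ∏ i, if u i ≠ γ i then exp t else 1 := by
    intro u
    rw [← prod_filter, prod_const, ← exp_nat_mul, hammingDist, mul_comm]
  have hcoord : ∀ c : S, ∑ s, (if s ≠ c then exp t else 1)
      = 1 + (Fintype.card S - 1) * exp t := by
    intro c
    rw [← add_sum_erase _ _ (mem_univ c), if_neg (not_not.2 rfl),
      sum_congr rfl fun s hs => if_pos (ne_of_mem_erase hs), sum_const,
      card_erase_of_mem (mem_univ c), card_univ, nsmul_eq_mul,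
      Nat.cast_sub (Fintype.card_pos_iff.2 ⟨c⟩), Nat.cast_one]
  simp_rw [hprod]
  rw [← Fintype.prod_sum (fun i s => if s ≠ γ i then exp t else 1)]
  simp_rw [hcoord, prod_const, card_univ]

theorem card_hammingDist_gt_le {ι S : Type*} [Fintype ι] [DecidableEq ι] [Fintype S]
    [DecidableEq S] [Nonempty S] (γ : ι → S) {δ : ℝ} (hδ0 : 0 ≤ δ) (hδ1 : δ ≤ 3 / 2) :
    (#{u | (1 - (Fintype.card S : ℝ)⁻¹) * (1 + δ) * Fintype.card ι < hammingDist u γ} : ℝ)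
      ≤ (Fintype.card S : ℝ) ^ Fintype.card ι
        * exp (-(δ ^ 2 * (1 - (Fintype.card S : ℝ)⁻¹) * Fintype.card ι / 3)) := by
  set q : ℝ := (Fintype.card S : ℝ)
  set m := Fintype.card ι
  set p : ℝ := 1 - q⁻¹
  have hq : 1 ≤ q := Nat.one_le_cast.2 Fintype.card_pos
  have hp : 0 ≤ p := sub_nonneg.2 (inv_le_one_of_one_le₀ hq)
  -- `t = 2δ/3` instead of the optimal `log (1 + δ)` keeps the exponent polynomial in `δ`
  set t : ℝ := 2 * δ / 3
  have hexponent : exp t - 1 - t * (1 + δ) ≤ -(δ ^ 2 / 3) := exp_two_thirds_mul_sub_le hδ0 hδ1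
  calc (#{u | p * (1 + δ) * m < hammingDist u γ} : ℝ)
      ≤ exp (-(t * (p * (1 + δ) * m))) * (1 + (q - 1) * exp t) ^ m := by
        rw [← sum_exp_mul_hammingDist]
        exact card_lt_le_exp_mul_sum_exp _ _ (by positivity)
    _ ≤ exp (-(t * (p * (1 + δ) * m))) * (q * exp (p * (exp t - 1))) ^ m := by
        gcongr
        exact one_add_sub_one_mul_le_mul_exp (by positivity) _
    _ = q ^ m * exp (p * m * (exp t - 1 - t * (1 + δ))) := by
        rw [mul_pow, ← exp_nat_mul, mul_left_comm, ← exp_add]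
        ring_nf
    _ ≤ q ^ m * exp (-(δ ^ 2 * p * m / 3)) := by
        gcongr
        nlinarith [mul_le_mul_of_nonneg_left hexponent (mul_nonneg hp (Nat.cast_nonneg' m))]

section JointProb

variable {K U : Type*} [Fintype K] [Fintype U] (w : K → ℝ)

/-- The probability of `E k u` when `k` is drawn with weights `w` and `u` uniformly from `U`. -/
noncomputable def jointProb (E : K → U → Prop) [∀ k u, Decidable (E k u)] : ℝ :=
  ∑ k, ∑ u, if E k u then w k * (Fintype.card U : ℝ)⁻¹ else 0

variable {w}

lemma jointProb_eq_inv_card [DecidableEq U] (hw1 : ∑ k, w k = 1) (f : K → U) :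
    jointProb w (fun k u => u = f k) = (Fintype.card U : ℝ)⁻¹ := by
  simp only [jointProb, Fintype.sum_ite_eq', ← sum_mul, hw1, one_mul]

lemma one_le_jointProb_add [Nonempty U] (hw0 : ∀ k, 0 ≤ w k) (hw1 : ∑ k, w k = 1)
    {E₁ E₂ E₃ E₄ : K → U → Prop} [∀ k u, Decidable (E₁ k u)] [∀ k u, Decidable (E₂ k u)]
    [∀ k u, Decidable (E₃ k u)] [∀ k u, Decidable (E₄ k u)]
    (hcover : ∀ k u, E₁ k u ∨ E₂ k u ∨ E₃ k u ∨ E₄ k u) :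
    1 ≤ jointProb w E₁ + jointProb w E₂ + jointProb w E₃ + jointProb w E₄ := by
  have hmass : ∀ k, ∑ _u : U, w k * (Fintype.card U : ℝ)⁻¹ = w k := fun k => by
    rw [sum_const, card_univ, nsmul_eq_mul]
    field_simp [Fintype.card_ne_zero]
  calc (1 : ℝ) = ∑ k, ∑ _u : U, w k * (Fintype.card U : ℝ)⁻¹ := by simp only [hmass, hw1]
    _ ≤ ∑ k, ∑ u, ((if E₁ k u then w k * (Fintype.card U : ℝ)⁻¹ else 0)
          + (if E₂ k u then w k * (Fintype.card U : ℝ)⁻¹ else 0)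
          + (if E₃ k u then w k * (Fintype.card U : ℝ)⁻¹ else 0)
          + (if E₄ k u then w k * (Fintype.card U : ℝ)⁻¹ else 0)) := by
        gcongr with k _ u _
        have : 0 ≤ w k * (Fintype.card U : ℝ)⁻¹ := mul_nonneg (hw0 k) (by positivity)
        rcases hcover k u with h | h | h | h <;> simp only [h, if_true] <;> split_ifs <;> linarith
    _ = _ := by simp only [jointProb, sum_add_distrib]

lemma jointProb_le_of_card_le [Nonempty U] (hw0 : ∀ k, 0 ≤ w k) (hw1 : ∑ k, w k = 1)
    {E : K → U → Prop} [∀ k u, Decidable (E k u)] {c : ℝ}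
    (h : ∀ k, (#{u | E k u} : ℝ) ≤ c * Fintype.card U) :
    jointProb w E ≤ c := by
  calc jointProb w E = ∑ k, w k * ((#{u | E k u} : ℝ) * (Fintype.card U : ℝ)⁻¹) := by
        refine sum_congr rfl fun k _ => ?_
        rw [← sum_filter, sum_const, nsmul_eq_mul]
        ring
    _ ≤ ∑ k, w k * c := by
        gcongr with k _
        · exact hw0 k
        · rw [mul_inv_le_iff₀ (by exact_mod_cast Fintype.card_pos)]
          exact h k
    _ = c := by rw [← sum_mul, hw1, one_mul]

lemma jointProb_le_of_forall_sum_le [Nonempty U] {E : K → U → Prop} [∀ k u, Decidable (E k u)]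
    {c : ℝ} (h : ∀ u, (∑ k, if E k u then w k else 0) ≤ c) : jointProb w E ≤ c := by
  calc jointProb w E = ∑ u : U, (Fintype.card U : ℝ)⁻¹ * ∑ k, if E k u then w k else 0 := by
        rw [jointProb, sum_comm]
        simp only [mul_sum, mul_ite, mul_zero, mul_comm]
    _ ≤ ∑ _u : U, (Fintype.card U : ℝ)⁻¹ * c := by
        gcongr with u
        exact h u
    _ = c := by
        rw [sum_const, card_univ, nsmul_eq_mul, ← mul_assoc]
        field_simp [Fintype.card_ne_zero]

end JointProb

lemma resample_cases {S : Type} [Fintype S] [DecidableEq S] {n : ℕ} (b : ℝ)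
    (D : (Fin n → S) → DecOut) (γ u : Fin n → S) :
    u = γ ∨ b < hammingDist u γ ∨ D u ≠ DecOut.invalid
      ∨ (D (resample b γ u) ≠ DecOut.tampered ∧ resample b γ u ≠ γ) := by
  by_cases hu : u = γ
  · exact Or.inl hu
  by_cases hb : b < hammingDist u γ
  · exact Or.inr (Or.inl hb)
  rw [resample, if_pos (not_lt.1 hb)]
  cases D u <;> simp [hu]

theorem stmt_1_general
    {S K : Type} [Fintype S] [DecidableEq S] [Fintype K]
    {n : ℕ} (hq : 2 ≤ Fintype.card S)
    (δ : ℝ) (hδ0 : 0 < δ) (hδ1 : δ < 1)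
    (w : K → ℝ) (hw0 : ∀ k, 0 ≤ w k) (hw1 : ∑ k, w k = 1)
    (Enc : K → Fin n → S) (Dec : K → (Fin n → S) → DecOut)
    (εs εt : ℝ)
    (hsound : ∀ γ : Fin n → S,
      (∑ k, if Dec k γ ≠ DecOut.invalid then w k else 0) ≤ εs)
    (htamper :
      (∑ k, ∑ u : Fin n → S,
        if Dec k (resample ((1 - (Fintype.card S : ℝ)⁻¹) * (1 + δ) * n) (Enc k) u)
              ≠ DecOut.tampered
           ∧ resample ((1 - (Fintype.card S : ℝ)⁻¹) * (1 + δ) * n) (Enc k) u ≠ Enc k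
        then w k * ((Fintype.card S : ℝ) ^ n)⁻¹ else 0) ≤ εt) :
    1 - ((Fintype.card S : ℝ) ^ n)⁻¹
      - Real.exp (-(δ ^ 2 * (1 - (Fintype.card S : ℝ)⁻¹) * n / 3)) ≤ εs + εt := by
  have : Nonempty S := Fintype.card_pos_iff.1 (by omega)
  set b := (1 - (Fintype.card S : ℝ)⁻¹) * (1 + δ) * n
  have hcard : (Fintype.card (Fin n → S) : ℝ) = (Fintype.card S : ℝ) ^ n := by simp
  have hcover := one_le_jointProb_add hw0 hw1 fun k u => resample_cases b (Dec k) (Enc k) u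
  have hfar : jointProb w (fun k u => b < hammingDist u (Enc k))
      ≤ exp (-(δ ^ 2 * (1 - (Fintype.card S : ℝ)⁻¹) * n / 3)) :=
    jointProb_le_of_card_le hw0 hw1 fun k => by
      rw [hcard, mul_comm]
      simpa only [Fintype.card_fin] using card_hammingDist_gt_le (Enc k) hδ0.le (by linarith)
  have hsound' := jointProb_le_of_forall_sum_le (w := w) hsound
  have htamper' : jointProb w (fun k u => Dec k (resample b (Enc k) u) ≠ DecOut.tampered
      ∧ resample b (Enc k) u ≠ Enc k) ≤ εt := by
    rwa [jointProb, hcard]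
  rw [jointProb_eq_inv_card hw1, hcard] at hcover
  linarith

/-- Over an alphabet of size `q ≥ 2`, for `δ ∈ (0,1)` and
`α = (1 - 1/q)(1 + δ)`: any messageless secret-key code with soundness error `εs`
whose tamper-detection failure against the truncated uniform resampler with budget
`α·n` is at most `εt` satisfies `εs + εt ≥ 1 - q^(-n) - exp(-δ²(1 - 1/q)n/3)`. -/
theorem stmt_1
    {S K : Type} [Fintype S] [DecidableEq S] [Fintype K] [Nonempty K]
    {n : ℕ} (hn : 1 ≤ n) (hq : 2 ≤ Fintype.card S)
    (δ : ℝ) (hδ0 : 0 < δ) (hδ1 : δ < 1)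
    (w : K → ℝ) (hw0 : ∀ k, 0 ≤ w k) (hw1 : ∑ k, w k = 1)
    (Enc : K → Fin n → S) (Dec : K → (Fin n → S) → DecOut)
    (εs εt : ℝ)
    (hsound : ∀ γ : Fin n → S,
      (∑ k, if Dec k γ ≠ DecOut.invalid then w k else 0) ≤ εs)
    (htamper :
      (∑ k, ∑ u : Fin n → S,
        if Dec k (resample ((1 - (Fintype.card S : ℝ)⁻¹) * (1 + δ) * n) (Enc k) u)
              ≠ DecOut.tampered
           ∧ resample ((1 - (Fintype.card S : ℝ)⁻¹) * (1 + δ) * n) (Enc k) u ≠ Enc k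
        then w k * ((Fintype.card S : ℝ) ^ n)⁻¹ else 0) ≤ εt) :
    1 - ((Fintype.card S : ℝ) ^ n)⁻¹
      - Real.exp (-(δ ^ 2 * (1 - (Fintype.card S : ℝ)⁻¹) * n / 3)) ≤ εs + εt :=
  stmt_1_general hq δ hδ0 hδ1 w hw0 hw1 Enc Dec εs εt hsound htamper
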